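/- Negativity of the entropy-production quadratic form J: Fix (ρ,e) ∈ (0,∞)² and real numbers a ≥ 0, d ≥ 0. Define the quadratic form J on pairs (X,Y) ∈ ℝ^d × ℝ^d by J = (X,Y)·N·(X,Y)^T where n₁₁ = (d−a) ρ s_ρ s_e^{−1} s_{ρe} + a ρ^{−1} ∂_ρ(ρ² s_ρ), 2 n₁₂ = (d−a) ρ s_ρ s_e^{−1} s_{ee} + (d+a) ρ s_{ρe}, and n₂₂ = d ρ s_{ee}. Then J is negative semi-definite if and only if a·d·det(Σ) − (1/4)(d−a)² ρ^{−2} s_e² p_e² ≥ 0. -/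

import Mathlib

noncomputable section

open Real

/-- Partial derivative with respect to the first variable (`ρ`). -/
def D1 (f : ℝ × ℝ → ℝ) (x : ℝ × ℝ) : ℝ := fderiv ℝ f x (1, 0)

/-- Partial derivative with respect to the second variable (`e`). -/
def D2 (f : ℝ × ℝ → ℝ) (x : ℝ × ℝ) : ℝ := fderiv ℝ f x (0, 1)

/-- The state domain `(0,∞)²`. -/
def dom : Set (ℝ × ℝ) := {x : ℝ × ℝ | 0 < x.1 ∧ 0 < x.2}

/-- `s_ρ` -/
def sRho (s : ℝ × ℝ → ℝ) : ℝ × ℝ → ℝ := D1 s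

/-- `s_e` -/
def sE (s : ℝ × ℝ → ℝ) : ℝ × ℝ → ℝ := D2 s

/-- `s_{ρe}` -/
def sRhoE (s : ℝ × ℝ → ℝ) : ℝ × ℝ → ℝ := D1 (D2 s)

/-- `s_{ee}` -/
def sEE (s : ℝ × ℝ → ℝ) : ℝ × ℝ → ℝ := D2 (D2 s)

/-- The pressure `p := -ρ² s_ρ / s_e`. -/
def press (s : ℝ × ℝ → ℝ) (x : ℝ × ℝ) : ℝ := -x.1 ^ 2 * sRho s x / sE s x

/-- The temperature `T := 1 / s_e`. -/
def temp (s : ℝ × ℝ → ℝ) (x : ℝ × ℝ) : ℝ := (sE s x)⁻¹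

/-- `∂_ρ(ρ² s_ρ)` -/
def dRho2sRho (s : ℝ × ℝ → ℝ) (x : ℝ × ℝ) : ℝ :=
  deriv (fun r : ℝ => r ^ 2 * sRho s (r, x.2)) x.1

/-- `det Σ := ∂_ρ(ρ² s_ρ)·s_{ee} - ρ² s_{ρe}²`. -/
def detSigma (s : ℝ × ℝ → ℝ) (x : ℝ × ℝ) : ℝ :=
  dRho2sRho s x * sEE s x - x.1 ^ 2 * (sRhoE s x) ^ 2

/-- `p_ρ` -/
def pRho (s : ℝ × ℝ → ℝ) : ℝ × ℝ → ℝ := D1 (press s)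

/-- `p_e` -/
def pE (s : ℝ × ℝ → ℝ) : ℝ × ℝ → ℝ := D2 (press s)

/-- `T_ρ` -/
def tRho (s : ℝ × ℝ → ℝ) : ℝ × ℝ → ℝ := D1 (temp s)

/-- `T_e` -/
def tE (s : ℝ × ℝ → ℝ) : ℝ × ℝ → ℝ := D2 (temp s)

/-- The specific heat at constant pressure
`c_p := s_e⁻¹ (p_ρ s_e - p_e s_ρ) / (p_ρ T_e - p_e T_ρ)`. -/
def cP (s : ℝ × ℝ → ℝ) (x : ℝ × ℝ) : ℝ :=
  (sE s x)⁻¹ * (pRho s x * sE s x - pE s x * sRho s x) /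
    (pRho s x * tE s x - pE s x * tRho s x)

/-- The squared sound speed `c² := p_ρ - (s_ρ/s_e) p_e`. -/
def cSq (s : ℝ × ℝ → ℝ) (x : ℝ × ℝ) : ℝ := pRho s x - sRho s x / sE s x * pE s x

/-- The convexity conditions `∂_ρ(ρ² s_ρ) < 0`, `s_{ee} < 0`, `det Σ > 0` on the domain. -/
def Convexity (s : ℝ × ℝ → ℝ) : Prop :=
  ∀ x ∈ dom, dRho2sRho s x < 0 ∧ sEE s x < 0 ∧ 0 < detSigma s x

/-!
`J` is the coordinatewise sum of the scalar form `n₁₁x² + 2n₁₂xy + n₂₂y²`, so it is negative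
semidefinite iff `n₁₁ ≤ 0`, `n₂₂ ≤ 0` and `n₁₂² ≤ n₁₁n₂₂`. By the symmetry of the mixed partials
of `s`, `p_e = ρ²(s_ρ s_ee - s_ρe s_e)/s_e²`, and with this `n₁₁n₂₂ - n₁₂²` is exactly
`a d det Σ - ¼(d-a)²ρ⁻²s_e²p_e²`. The diagonal conditions then follow from `s_ee < 0` and
`det Σ > 0`.
-/

section QuadraticForm

variable {K : Type*} [Field K] [LinearOrder K] [IsStrictOrderedRing K]

theorem quadratic_form_nonpos_iff (n11 n12 n22 : K) :
    (∀ x y : K, n11 * (x * x) + 2 * n12 * (x * y) + n22 * (y * y) ≤ 0) ↔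
      n11 ≤ 0 ∧ n22 ≤ 0 ∧ n12 ^ 2 ≤ n11 * n22 := by
  constructor
  · intro h
    have h11 : n11 ≤ 0 := by simpa using h 1 0
    have h22 : n22 ≤ 0 := by simpa using h 0 1
    have hdisc : discrim (-n11) (-(2 * n12)) (-n22) ≤ 0 :=
      discrim_le_zero fun x => by linarith [h x 1]
    refine ⟨h11, h22, ?_⟩
    rw [discrim] at hdisc
    linarith
  · rintro ⟨h11, h22, hdet⟩ x y
    rcases h11.lt_or_eq with h11 | rfl
    · -- `n11 · J(x, y) = (n11 x + n12 y)² + (n11 n22 - n12²) y²`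
      nlinarith [sq_nonneg (n11 * x + n12 * y), mul_nonneg (sub_nonneg.2 hdet) (mul_self_nonneg y)]
    · obtain rfl : n12 = 0 := by nlinarith
      nlinarith [mul_self_nonneg y]

theorem forall_sum_quadratic_form_nonpos_iff {ι : Type*} [Fintype ι] [Nonempty ι]
    (n11 n12 n22 : K) :
    (∀ X Y : ι → K,
        n11 * (∑ i, X i * X i) + 2 * n12 * (∑ i, X i * Y i) + n22 * (∑ i, Y i * Y i) ≤ 0) ↔
      ∀ x y : K, n11 * (x * x) + 2 * n12 * (x * y) + n22 * (y * y) ≤ 0 := by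
  constructor
  · intro h x y
    classical
    obtain ⟨i⟩ := ‹Nonempty ι›
    simpa [Pi.single_apply] using h (Pi.single i x) (Pi.single i y)
  · intro h X Y
    simp only [Finset.mul_sum, ← Finset.sum_add_distrib]
    exact Finset.sum_nonpos fun i _ => h (X i) (Y i)

end QuadraticForm

section SecondDerivatives

variable {E F : Type*} [NormedAddCommGroup E] [NormedSpace ℝ E] [NormedAddCommGroup F]
  [NormedSpace ℝ F] {g : E → F} {x : E}

theorem differentiableAt_fderiv_apply (hg : ContDiffAt ℝ 2 g x) (v : E) :
    DifferentiableAt ℝ (fun y => fderiv ℝ g y v) x :=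
  ((hg.fderiv_right (m := 1) (by norm_num)).differentiableAt one_ne_zero).clm_apply
    (differentiableAt_const v)

theorem fderiv_fderiv_apply_comm (hg : ContDiffAt ℝ 2 g x) (v w : E) :
    fderiv ℝ (fun y => fderiv ℝ g y v) x w = fderiv ℝ (fun y => fderiv ℝ g y w) x v := by
  have hdg := (hg.fderiv_right (m := 1) (by norm_num)).differentiableAt one_ne_zero
  rw [fderiv_clm_apply hdg (differentiableAt_const _),
    fderiv_clm_apply hdg (differentiableAt_const _)]
  simpa using hg.isSymmSndFDerivAt (by simp) w v

end SecondDerivatives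

section PartialDerivatives

variable {f : ℝ × ℝ → ℝ} {z : ℝ × ℝ}

theorem hasDerivAt_D2 (hf : DifferentiableAt ℝ f z) :
    HasDerivAt (fun t => f (z.1, t)) (D2 f z) z.2 :=
  hf.hasFDerivAt.comp_hasDerivAt z.2 ((hasDerivAt_const _ _).prodMk (hasDerivAt_id _))

theorem D2_D1_eq_D1_D2 (hf : ContDiffAt ℝ 2 f z) : D2 (D1 f) z = D1 (D2 f) z :=
  fderiv_fderiv_apply_comm hf _ _

end PartialDerivatives

theorem pE_eq {s : ℝ × ℝ → ℝ} {z : ℝ × ℝ} (hs : ContDiffAt ℝ 2 s z) (hse : sE s z ≠ 0) :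
    pE s z = z.1 ^ 2 * (sRho s z * sEE s z - sRhoE s z * sE s z) / sE s z ^ 2 := by
  have hsRho : DifferentiableAt ℝ (sRho s) z := differentiableAt_fderiv_apply hs (1, 0)
  have hsE : DifferentiableAt ℝ (sE s) z := differentiableAt_fderiv_apply hs (0, 1)
  have hpress : DifferentiableAt ℝ (press s) z := by
    unfold press
    fun_prop (disch := exact hse)
  have hline := ((hasDerivAt_D2 hsRho).const_mul (-z.1 ^ 2)).div (hasDerivAt_D2 hsE) hse
  rw [pE, (hasDerivAt_D2 hpress).unique hline, sRho, D2_D1_eq_D1_D2 hs]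
  simp only [Prod.mk.eta, sRhoE, sEE, sE]
  ring

theorem isOpen_dom : IsOpen dom := isOpen_Ioi.prod isOpen_Ioi

theorem n11_nonpos_of_sq_le_mul {ρ sρ se sρe see A a d n11 n12 n22 : ℝ} (hρ : 0 < ρ)
    (hse : 0 < se) (hsee : see < 0) (hsigma : 0 < A * see - ρ ^ 2 * sρe ^ 2) (ha : 0 ≤ a)
    (hd : 0 ≤ d) (e11 : n11 = (d - a) * ρ * sρ * se⁻¹ * sρe + a * ρ⁻¹ * A)
    (e12 : 2 * n12 = (d - a) * ρ * sρ * se⁻¹ * see + (d + a) * ρ * sρe)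
    (e22 : n22 = d * ρ * see) (hdet : n12 ^ 2 ≤ n11 * n22) : n11 ≤ 0 := by
  rcases hd.eq_or_lt with rfl | hd
  · have hn12 : n12 = 0 := by
      rw [e22, zero_mul, zero_mul, mul_zero] at hdet
      exact pow_eq_zero_iff two_ne_zero |>.1 (le_antisymm hdet (sq_nonneg n12))
    -- with `d = 0`, `n₁₂ = 0` says `a s_ρ s_ee = a s_ρe s_e`, which turns `s_e s_ee n₁₁` into
    -- `a ρ⁻¹ s_e det Σ`
    have hcross : a * sρ * see = a * sρe * se := by
      rw [hn12] at e12
      field_simp at e12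
      exact mul_left_cancel₀ hρ.ne' (by linarith)
    have hn11 : se * see * n11 = a / ρ * se * (A * see - ρ ^ 2 * sρe ^ 2) := by
      rw [e11]
      field_simp
      linear_combination (-ρ ^ 2 * sρe) * hcross
    have : 0 ≤ se * see * n11 := by rw [hn11]; positivity
    nlinarith [mul_neg_of_pos_of_neg hse hsee]
  · have hn22 : n22 < 0 := by rw [e22]; exact mul_neg_of_pos_of_neg (mul_pos hd hρ) hsee
    nlinarith [sq_nonneg n12]

/-- **Negativity of the entropy-production quadratic form `J`:** with
`n₁₁ = (d-a) ρ s_ρ s_e⁻¹ s_{ρe} + a ρ⁻¹ ∂_ρ(ρ² s_ρ)`,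
`2 n₁₂ = (d-a) ρ s_ρ s_e⁻¹ s_{ee} + (d+a) ρ s_{ρe}`, `n₂₂ = d ρ s_{ee}`,
the quadratic form `J(X,Y) = n₁₁|X|² + 2 n₁₂ X·Y + n₂₂|Y|²` is negative semi-definite
if and only if `a d det Σ - (1/4)(d-a)² ρ⁻² s_e² p_e² ≥ 0`. -/
theorem J_negative_semidefinite_iff
    (s : ℝ × ℝ → ℝ) (hs : ContDiffOn ℝ 2 s dom)
    (hse : ∀ x ∈ dom, 0 < sE s x) (hconv : Convexity s)
    (z : ℝ × ℝ) (hz : z ∈ dom)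
    (a dcoef : ℝ) (ha : 0 ≤ a) (hd : 0 ≤ dcoef)
    (n11 n12 n22 : ℝ)
    (e11 : n11 = (dcoef - a) * z.1 * sRho s z * (sE s z)⁻¹ * sRhoE s z
      + a * z.1⁻¹ * dRho2sRho s z)
    (e12 : 2 * n12 = (dcoef - a) * z.1 * sRho s z * (sE s z)⁻¹ * sEE s z
      + (dcoef + a) * z.1 * sRhoE s z)
    (e22 : n22 = dcoef * z.1 * sEE s z)
    (d : ℕ) (hdim : 0 < d) :
    (∀ X Y : Fin d → ℝ,
        n11 * (∑ i, X i * X i) + 2 * n12 * (∑ i, X i * Y i) + n22 * (∑ i, Y i * Y i) ≤ 0)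
      ↔ 0 ≤ a * dcoef * detSigma s z
          - (1 / 4) * (dcoef - a) ^ 2 / z.1 ^ 2 * (sE s z) ^ 2 * (pE s z) ^ 2 := by
  have hρ : 0 < z.1 := hz.1
  have hsez : 0 < sE s z := hse z hz
  obtain ⟨-, hsee, hsigma⟩ := hconv z hz
  have hpE := pE_eq (hs.contDiffAt (isOpen_dom.mem_nhds hz)) hsez.ne'
  have hdet : n11 * n22 - n12 ^ 2 = a * dcoef * detSigma s z
      - (1 / 4) * (dcoef - a) ^ 2 / z.1 ^ 2 * (sE s z) ^ 2 * (pE s z) ^ 2 := by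
    rw [hpE, detSigma, e11, e22, (eq_div_iff (two_ne_zero' ℝ)).2 ((mul_comm _ _).trans e12)]
    field_simp
    ring
  have : Nonempty (Fin d) := ⟨⟨0, hdim⟩⟩
  rw [forall_sum_quadratic_form_nonpos_iff, quadratic_form_nonpos_iff, ← hdet, sub_nonneg]
  refine ⟨fun h => h.2.2, fun h => ⟨?_, ?_, h⟩⟩
  · exact n11_nonpos_of_sq_le_mul hρ hsez hsee hsigma ha hd e11 e12 e22 h
  · rw [e22]
    exact mul_nonpos_of_nonneg_of_nonpos (mul_nonneg hd hρ.le) hsee.le
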